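/- arXiv:2306.16417 — 10 statements merged into one kernel-verified Lean document; each statement's English description precedes it below -/
import Mathlib

section
/- If M is a minimal semimodule over a ring R, then (M,+) is an abelian group, i.e., every element of M has an additive inverse; consequently M is an R-module. -/
universe u

section Defs

variable (S : Type u) [NonUnitalSemiring S]

structure IsRightAction (M : Type u) [AddCommMonoid M] (act : M → S → M) : Prop where
  add_act : ∀ (m₁ m₂ : M) (s : S), act (m₁ + m₂) s = act m₁ s + act m₂ s
  act_add : ∀ (m : M) (s₁ s₂ : S), act m (s₁ + s₂) = act m s₁ + act m s₂
  act_mul : ∀ (m : M) (s₁ s₂ : S), act m (s₁ * s₂) = act (act m s₁) s₂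
  act_zero : ∀ m : M, act m (0 : S) = 0
  zero_act : ∀ s : S, act (0 : M) s = 0

def IsSubsemimodule (M : Type u) [AddCommMonoid M] (act : M → S → M) (N : Set M) : Prop :=
  (0 : M) ∈ N ∧ (∀ x ∈ N, ∀ y ∈ N, x + y ∈ N) ∧ (∀ x ∈ N, ∀ s : S, act x s ∈ N)

def IsMinimal (M : Type u) [AddCommMonoid M] (act : M → S → M) : Prop :=
  (∃ (m : M) (s : S), act m s ≠ 0) ∧
    ∀ N : Set M, IsSubsemimodule S M act N → N = {(0 : M)} ∨ N = Set.univ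

def IsSemimoduleCong (M : Type u) [AddCommMonoid M] (act : M → S → M)
    (r : M → M → Prop) : Prop :=
  Equivalence r ∧ (∀ a b c : M, r a b → r (a + c) (b + c)) ∧
    (∀ (a b : M) (s : S), r a b → r (act a s) (act b s))

def IsSimple (M : Type u) [AddCommMonoid M] (act : M → S → M) : Prop :=
  IsMinimal S M act ∧ ∀ r : M → M → Prop, IsSemimoduleCong S M act r →
    (∀ a b, r a b → a = b) ∨ (∀ a b, r a b)

def IsRightCongruence (ρ : S → S → Prop) : Prop :=
  Equivalence ρ ∧ (∀ a b c : S, ρ a b → ρ (a + c) (b + c)) ∧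
    (∀ a b c : S, ρ a b → ρ (a * c) (b * c))

def IsCongruence (ρ : S → S → Prop) : Prop :=
  IsRightCongruence S ρ ∧ ∀ a b c : S, ρ a b → ρ (c * a) (c * b)

def IsRegularCong (ρ : S → S → Prop) : Prop := ∃ e : S, ∀ s : S, ρ (e * s) s

def IsRightIdeal (I : Set S) : Prop :=
  (0 : S) ∈ I ∧ (∀ x ∈ I, ∀ y ∈ I, x + y ∈ I) ∧ ∀ x ∈ I, ∀ s : S, x * s ∈ I

def IsSaturated (ρ : S → S → Prop) (I : Set S) : Prop := ∀ s i : S, i ∈ I → ρ s i → s ∈ I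

def IsMaximalSaturatedRightIdeal (ρ : S → S → Prop) (I : Set S) : Prop :=
  IsRightIdeal S I ∧ IsSaturated S ρ I ∧ I ≠ Set.univ ∧
    ∀ J : Set S, IsRightIdeal S J → IsSaturated S ρ J → I ⊆ J → J = I ∨ J = Set.univ

def zeroClass (ρ : S → S → Prop) : Set S := {s : S | ρ s 0}

def IsMRegular (ρ : S → S → Prop) : Prop :=
  IsRightCongruence S ρ ∧ IsRegularCong S ρ ∧
    IsMaximalSaturatedRightIdeal S ρ (zeroClass S ρ)

def IsMaximalRightCongruence (ρ : S → S → Prop) : Prop :=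
  IsRightCongruence S ρ ∧ (∃ a b : S, ¬ ρ a b) ∧
    ∀ τ : S → S → Prop, IsRightCongruence S τ → (∀ a b, ρ a b → τ a b) →
      (∀ a b, τ a b ↔ ρ a b) ∨ (∀ a b, τ a b)

/-- `φ : S → M` realizes `M` as the quotient right `S`-semimodule `S/μ`. -/
def IsQuotientModel (μ : S → S → Prop) (M : Type u) [AddCommMonoid M]
    (act : M → S → M) (φ : S → M) : Prop :=
  Function.Surjective φ ∧ (∀ a b : S, φ (a + b) = φ a + φ b) ∧ φ 0 = 0 ∧
    (∀ (a : S) (s : S), φ (a * s) = act (φ a) s) ∧ ∀ a b : S, φ a = φ b ↔ μ a b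

end Defs

/-- A minimal semimodule over a ring `R` is an abelian group under
addition: every element has an additive inverse. -/
theorem minimal_over_ring_has_neg {R : Type u} [Ring R]
    {M : Type u} [AddCommMonoid M] (act : M → R → M)
    (hact : IsRightAction R M act) (hmin : IsMinimal R M act) :
    ∀ m : M, ∃ n : M, m + n = 0 := by
  obtain ⟨⟨m₀, s₀, hms⟩, hN⟩ := hmin
  set N : Set M := {m : M | ∃ n : M, m + n = 0} with hNdef
  have hsub : IsSubsemimodule R M act N := by
    refine ⟨⟨0, by simp⟩, ?_, ?_⟩
    · rintro x ⟨nx, hx⟩ y ⟨ny, hy⟩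
      exact ⟨nx + ny, by rw [show x + y + (nx + ny) = (x + nx) + (y + ny) by rw [add_add_add_comm], hx, hy, add_zero]⟩
    · rintro x ⟨nx, hx⟩ s
      exact ⟨act nx s, by rw [← hact.add_act, hx, hact.zero_act]⟩
  rcases hN N hsub with h | h
  · exfalso
    apply hms
    have : act m₀ s₀ ∈ N := ⟨act m₀ (-s₀), by
      rw [← hact.act_add, add_neg_cancel, hact.act_zero]⟩
    rw [h] at this
    exact this
  · intro m
    have : m ∈ N := by rw [h]; trivial
    exact this
end

section
/- A right S-semimodule M is minimal if and only if there exists a regular right congruence μ on S such that S/μ ≅ M as S-semimodules and [0]_μ is a maximal μ-saturated right ideal in S. -/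
universe u

/-- An `S`-semimodule `M` is minimal iff there is a regular right
congruence `μ` on `S` with `S/μ ≅ M` and `[0]_μ` a maximal `μ`-saturated right
ideal in `S`. -/
theorem minimal_iff_quotient_by_regular {S : Type u} [NonUnitalSemiring S]
    {M : Type u} [AddCommMonoid M] (act : M → S → M)
    (hact : IsRightAction S M act) :
    IsMinimal S M act ↔
      ∃ μ : S → S → Prop, IsRightCongruence S μ ∧ IsRegularCong S μ ∧
        (∃ φ : S → M, IsQuotientModel S μ M act φ) ∧
        IsMaximalSaturatedRightIdeal S μ (zeroClass S μ) := by
  constructor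
  · rintro ⟨⟨m, s₀, hms⟩, hmin⟩
    have hNsub : IsSubsemimodule S M act (Set.range (act m)) := by
      refine ⟨⟨0, hact.act_zero m⟩, ?_, ?_⟩
      · rintro x ⟨s, rfl⟩ y ⟨t, rfl⟩
        exact ⟨s + t, hact.act_add m s t⟩
      · rintro x ⟨s, rfl⟩ t
        exact ⟨s * t, hact.act_mul m s t⟩
    have hNuniv : Set.range (act m) = Set.univ := by
      rcases hmin _ hNsub with h | h
      · exfalso
        apply hms
        have : act m s₀ ∈ Set.range (act m) := ⟨s₀, rfl⟩
        rw [h] at this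
        exact this
      · exact h
    have hsurj : Function.Surjective (act m) := fun x => by
      have : x ∈ Set.range (act m) := hNuniv ▸ Set.mem_univ x
      exact this
    refine ⟨fun a b => act m a = act m b, ?_, ?_, ?_, ?_⟩
    · refine ⟨⟨fun _ => rfl, Eq.symm, Eq.trans⟩, ?_, ?_⟩
      · intro a b c h
        rw [hact.act_add, hact.act_add, h]
      · intro a b c h
        rw [hact.act_mul, hact.act_mul, h]
    · obtain ⟨e, he⟩ := hsurj m
      refine ⟨e, fun s => ?_⟩
      show act m (e * s) = act m s
      rw [hact.act_mul, he]
    · exact ⟨act m, hsurj, fun a b => hact.act_add m a b, hact.act_zero m,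
        fun a s => hact.act_mul m a s, fun a b => Iff.rfl⟩
    · have hzc : zeroClass S (fun a b => act m a = act m b)
          = {s | act m s = 0} := by
        ext s
        simp [zeroClass, hact.act_zero]
      rw [hzc]
      refine ⟨⟨by simp [hact.act_zero], ?_, ?_⟩, ?_, ?_, ?_⟩
      · intro x hx y hy
        simp only [Set.mem_setOf_eq] at *
        rw [hact.act_add, hx, hy, add_zero]
      · intro x hx s
        simp only [Set.mem_setOf_eq] at *
        rw [hact.act_mul, hx, hact.zero_act]
      · intro s i hi hsi
        simp only [Set.mem_setOf_eq] at *
        rw [hsi, hi]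
      · intro h
        exact hms (by have := h ▸ Set.mem_univ s₀; exact this)
      · intro J hJ hJsat hsub
        have himg : IsSubsemimodule S M act (act m '' J) := by
          refine ⟨⟨0, hJ.1, hact.act_zero m⟩, ?_, ?_⟩
          · rintro x ⟨a, ha, rfl⟩ y ⟨b, hb, rfl⟩
            exact ⟨a + b, hJ.2.1 a ha b hb, hact.act_add m a b⟩
          · rintro x ⟨a, ha, rfl⟩ s
            exact ⟨a * s, hJ.2.2 a ha s, hact.act_mul m a s⟩
        rcases hmin _ himg with h | h
        · left
          ext a
          constructor
          · intro ha
            have : act m a ∈ act m '' J := ⟨a, ha, rfl⟩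
            rw [h] at this
            exact this
          · intro ha
            simp only [Set.mem_setOf_eq] at ha
            refine hJsat a 0 hJ.1 ?_
            show act m a = act m 0
            rw [ha, hact.act_zero]
        · right
          ext s
          simp only [Set.mem_univ, iff_true]
          have : act m s ∈ act m '' J := h ▸ Set.mem_univ _
          obtain ⟨j, hj, hjs⟩ := this
          exact hJsat s j hj hjs.symm
  · rintro ⟨μ, hcong, ⟨e, he⟩, ⟨φ, hφsurj, hφadd, hφzero, hφmul, hφiff⟩,
      hid, hsat, hne, hmax⟩
    constructor
    · obtain ⟨t, ht⟩ := (Set.ne_univ_iff_exists_notMem _).mp hne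
      refine ⟨φ e, t, fun h => ht ?_⟩
      have h1 : φ (e * t) = φ t := (hφiff _ _).mpr (he t)
      rw [hφmul] at h1
      show μ t 0
      exact (hφiff t 0).mp (by rw [← h1, h, hφzero])
    · intro N hN
      set J : Set S := φ ⁻¹' N with hJdef
      have hJ : IsRightIdeal S J := by
        refine ⟨?_, ?_, ?_⟩
        · show φ 0 ∈ N
          rw [hφzero]; exact hN.1
        · intro x hx y hy
          show φ (x + y) ∈ N
          rw [hφadd]; exact hN.2.1 _ hx _ hy
        · intro x hx s
          show φ (x * s) ∈ N
          rw [hφmul]; exact hN.2.2 _ hx s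
      have hJsat : IsSaturated S μ J := by
        intro s i hi hsi
        show φ s ∈ N
        rw [(hφiff s i).mpr hsi]; exact hi
      have hsub : zeroClass S μ ⊆ J := by
        intro s hs
        show φ s ∈ N
        rw [(hφiff s 0).mpr hs, hφzero]
        exact hN.1
      rcases hmax J hJ hJsat hsub with h | h
      · left
        ext n
        simp only [Set.mem_singleton_iff]
        constructor
        · intro hn
          obtain ⟨a, rfl⟩ := hφsurj n
          have : a ∈ zeroClass S μ := h ▸ hn
          rw [(hφiff a 0).mpr this, hφzero]
        · rintro rfl
          exact hN.1
      · right
        ext n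
        simp only [Set.mem_univ, iff_true]
        obtain ⟨a, rfl⟩ := hφsurj n
        have ha : a ∈ J := by rw [h]; trivial
        exact ha
end

section
/- A right S-semimodule M is simple if and only if there exists a maximal regular right congruence μ on S such that S/μ ≅ M and [0]_μ is a maximal μ-saturated right ideal in S. -/
universe u

/-- An `S`-semimodule `M` is simple iff there is a maximal regular
right congruence `μ` on `S` with `S/μ ≅ M` and `[0]_μ` a maximal `μ`-saturated
right ideal in `S`. -/
theorem simple_iff_quotient_by_maximal_regular {S : Type u} [NonUnitalSemiring S]
    {M : Type u} [AddCommMonoid M] (act : M → S → M)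
    (hact : IsRightAction S M act) :
    IsSimple S M act ↔
      ∃ μ : S → S → Prop, IsMaximalRightCongruence S μ ∧ IsRegularCong S μ ∧
        (∃ φ : S → M, IsQuotientModel S μ M act φ) ∧
        IsMaximalSaturatedRightIdeal S μ (zeroClass S μ) := by
  constructor
  · rintro ⟨⟨⟨m0, s0, hms⟩, hmin⟩, hsimp⟩
    -- the quotient map
    have hNsub : IsSubsemimodule S M act (Set.range (fun s => act m0 s)) := by
      refine ⟨⟨0, hact.act_zero m0⟩, ?_, ?_⟩
      · rintro x ⟨a, rfl⟩ y ⟨b, rfl⟩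
        exact ⟨a + b, (hact.act_add m0 a b).symm ▸ rfl⟩
      · rintro x ⟨a, rfl⟩ s
        exact ⟨a * s, hact.act_mul m0 a s⟩
    have hsurj : Function.Surjective (fun s => act m0 s) := by
      rcases hmin _ hNsub with h | h
      · exfalso
        have : act m0 s0 ∈ Set.range (fun s => act m0 s) := ⟨s0, rfl⟩
        rw [h] at this
        exact hms this
      · intro x
        have : x ∈ Set.range (fun s => act m0 s) := h ▸ Set.mem_univ x
        exact this
    refine ⟨fun a b => act m0 a = act m0 b, ?_, ?_, ?_, ?_⟩
    · -- maximal right congruence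
      refine ⟨⟨⟨fun _ => rfl, fun h => h.symm, fun h h' => h.trans h'⟩, ?_, ?_⟩, ?_, ?_⟩
      · intro a b c h
        simp only [hact.act_add, h]
      · intro a b c h
        simp only [hact.act_mul, h]
      · refine ⟨s0, 0, ?_⟩
        show act m0 s0 ≠ act m0 0
        rw [hact.act_zero]
        exact hms
      · -- maximality via simplicity of congruences
        intro τ hτ hle
        have hwd : ∀ x x' y : S, act m0 x = act m0 x' → (τ x y ↔ τ x' y) := by
          intro x x' y h
          constructor
          · intro hxy; exact hτ.1.trans (hτ.1.symm (hle _ _ h)) hxy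
          · intro hxy; exact hτ.1.trans (hle _ _ h) hxy
        set r : M → M → Prop := fun a b => ∃ x y : S, act m0 x = a ∧ act m0 y = b ∧ τ x y
          with hr
        have hrc : IsSemimoduleCong S M act r := by
          refine ⟨⟨?_, ?_, ?_⟩, ?_, ?_⟩
          · intro a
            obtain ⟨x, hx⟩ := hsurj a
            exact ⟨x, x, hx, hx, hτ.1.refl x⟩
          · rintro a b ⟨x, y, hx, hy, hxy⟩
            exact ⟨y, x, hy, hx, hτ.1.symm hxy⟩
          · rintro a b c ⟨x, y, hx, hy, hxy⟩ ⟨y', z, hy', hz, hy'z⟩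
            refine ⟨x, z, hx, hz, hτ.1.trans hxy ?_⟩
            exact (hwd y' y z (hy'.trans hy.symm)).mp hy'z
          · rintro a b c ⟨x, y, hx, hy, hxy⟩
            obtain ⟨z, hz⟩ := hsurj c
            refine ⟨x + z, y + z, ?_, ?_, hτ.2.1 _ _ _ hxy⟩
            · rw [hact.act_add, hx]; exact congrArg _ hz
            · rw [hact.act_add, hy]; exact congrArg _ hz
          · rintro a b s ⟨x, y, hx, hy, hxy⟩
            refine ⟨x * s, y * s, ?_, ?_, hτ.2.2 _ _ _ hxy⟩
            · rw [hact.act_mul, hx]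
            · rw [hact.act_mul, hy]
        rcases hsimp r hrc with h | h
        · left
          intro a b
          constructor
          · intro hab
            exact h _ _ ⟨a, b, rfl, rfl, hab⟩
          · exact hle a b
        · right
          intro a b
          obtain ⟨x, y, hx, hy, hxy⟩ := h (act m0 a) (act m0 b)
          have h1 : τ a y := (hwd x a y hx).mp hxy
          have h2 : τ b a := (hwd y b a hy).mp (hτ.1.symm h1)
          exact hτ.1.symm h2
    · -- regular
      obtain ⟨e, he⟩ := hsurj m0
      refine ⟨e, fun s => ?_⟩
      show act m0 (e * s) = act m0 s
      simp only at he
      rw [hact.act_mul, he]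
    · -- quotient model
      refine ⟨fun s => act m0 s, hsurj, ?_, hact.act_zero m0, ?_, fun a b => Iff.rfl⟩
      · intro a b; exact hact.act_add m0 a b
      · intro a s; exact hact.act_mul m0 a s
    · -- maximal saturated right ideal
      have hz : ∀ s : S, s ∈ zeroClass S (fun a b => act m0 a = act m0 b) ↔
          act m0 s = 0 := by
        intro s
        simp only [zeroClass, Set.mem_setOf_eq, hact.act_zero]
      refine ⟨⟨?_, ?_, ?_⟩, ?_, ?_, ?_⟩
      · exact (hz 0).mpr (hact.act_zero m0)
      · intro x hx y hy
        rw [hz] at hx hy ⊢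
        rw [hact.act_add, hx, hy, add_zero]
      · intro x hx s
        rw [hz] at hx ⊢
        rw [hact.act_mul, hx, hact.zero_act]
      · intro s i hi hsi
        rw [hz] at hi ⊢
        rw [← hi]
        exact hsi
      · intro h
        have : s0 ∈ zeroClass S (fun a b => act m0 a = act m0 b) := h ▸ Set.mem_univ s0
        rw [hz] at this
        exact hms this
      · intro J hJ hJsat hIJ
        have hJsub : IsSubsemimodule S M act ((fun s => act m0 s) '' J) := by
          refine ⟨?_, ?_, ?_⟩
          · exact ⟨0, hIJ ((hz 0).mpr (hact.act_zero m0)), hact.act_zero m0⟩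
          · rintro x ⟨a, ha, rfl⟩ y ⟨b, hb, rfl⟩
            exact ⟨a + b, hJ.2.1 a ha b hb, hact.act_add m0 a b⟩
          · rintro x ⟨a, ha, rfl⟩ s
            exact ⟨a * s, hJ.2.2 a ha s, hact.act_mul m0 a s⟩
        rcases hmin _ hJsub with h | h
        · left
          apply Set.Subset.antisymm _ hIJ
          intro j hj
          have : act m0 j ∈ (fun s => act m0 s) '' J := ⟨j, hj, rfl⟩
          rw [h] at this
          exact (hz j).mpr this
        · right
          ext s
          simp only [Set.mem_univ, iff_true]
          have : act m0 s ∈ (fun s => act m0 s) '' J := h ▸ Set.mem_univ _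
          obtain ⟨j, hj, hjs⟩ := this
          exact hJsat s j hj hjs.symm
  · rintro ⟨μ, ⟨hμc, -, hmax⟩, ⟨e, he⟩, ⟨φ, hsurj, hadd, hzero, hactφ, hker⟩, hI⟩
    have hzc : ∀ s : S, s ∈ zeroClass S μ ↔ φ s = 0 := by
      intro s
      rw [zeroClass, Set.mem_setOf_eq, ← hker, hzero]
    obtain ⟨t, ht⟩ : ∃ t : S, t ∉ zeroClass S μ := by
      by_contra h
      push_neg at h
      exact hI.2.2.1 (Set.eq_univ_of_forall h)
    rw [hzc] at ht
    constructor
    · constructor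
      · -- minimal: nonzero action
        refine ⟨φ e, t, ?_⟩
        rw [← hactφ]
        intro h
        exact ht (((hker _ _).mpr (he t)).symm.trans h)
      · -- subsemimodules trivial
        intro N hN
        have hzJ : zeroClass S μ ⊆ φ ⁻¹' N := by
          intro s hs
          rw [hzc] at hs
          simp only [Set.mem_preimage, hs]
          exact hN.1
        have hJideal : IsRightIdeal S (φ ⁻¹' N) := by
          refine ⟨?_, ?_, ?_⟩
          · simp only [Set.mem_preimage, hzero]; exact hN.1
          · intro x hx y hy
            simp only [Set.mem_preimage, hadd] at *
            exact hN.2.1 _ hx _ hy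
          · intro x hx s
            simp only [Set.mem_preimage, hactφ] at *
            exact hN.2.2 _ hx s
        have hJsat : IsSaturated S μ (φ ⁻¹' N) := by
          intro s i hi hsi
          simp only [Set.mem_preimage] at *
          rw [(hker s i).mpr hsi]
          exact hi
        rcases hI.2.2.2 _ hJideal hJsat hzJ with h | h
        · left
          ext x
          simp only [Set.mem_singleton_iff]
          constructor
          · intro hx
            obtain ⟨s, rfl⟩ := hsurj x
            have : s ∈ φ ⁻¹' N := hx
            rw [h, hzc] at this
            exact this
          · rintro rfl
            exact hN.1
        · right
          ext x
          simp only [Set.mem_univ, iff_true]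
          obtain ⟨s, rfl⟩ := hsurj x
          have : s ∈ φ ⁻¹' N := h ▸ Set.mem_univ s
          exact this
    · -- congruence simplicity
      intro r ⟨req, radd, ract⟩
      have hτc : IsRightCongruence S (fun a b => r (φ a) (φ b)) := by
        refine ⟨⟨fun a => req.refl _, fun h => req.symm h, fun h h' => req.trans h h'⟩,
          ?_, ?_⟩
        · intro a b c h
          rw [hadd, hadd]
          exact radd _ _ _ h
        · intro a b c h
          rw [hactφ, hactφ]
          exact ract _ _ _ h
      have hle : ∀ a b, μ a b → r (φ a) (φ b) := by
        intro a b h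
        rw [(hker a b).mpr h]
        exact req.refl _
      rcases hmax _ hτc hle with h | h
      · left
        intro a b hab
        obtain ⟨x, rfl⟩ := hsurj a
        obtain ⟨y, rfl⟩ := hsurj b
        exact (hker x y).mpr ((h x y).mp hab)
      · right
        intro a b
        obtain ⟨x, rfl⟩ := hsurj a
        obtain ⟨y, rfl⟩ := hsurj b
        exact h x y
end

section
/- If M is a minimal right S-semimodule and m ∈ M is nonzero, then δ_m = {(a,b) : ma = mb} is a regular right congruence on S whose zero class [0]_{δ_m} = {s ∈ S : ms = 0} is a maximal δ_m-saturated right ideal in S. -/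
universe u

theorem exists_act_ne_zero_of_minimal {S : Type u} [NonUnitalSemiring S]
    {M : Type u} [AddCommMonoid M] (act : M → S → M)
    (hact : IsRightAction S M act) (hmin : IsMinimal S M act)
    (m : M) (hm : m ≠ 0) : ∃ s : S, act m s ≠ 0 := by
  by_contra h
  push_neg at h
  have hN : IsSubsemimodule S M act {x : M | ∀ s : S, act x s = 0} := by
    refine ⟨fun s => hact.zero_act s, ?_, ?_⟩
    · intro x hx y hy s
      simp only [Set.mem_setOf_eq] at *
      rw [hact.add_act, hx s, hy s, add_zero]
    · intro x hx s t
      simp only [Set.mem_setOf_eq] at *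
      rw [← hact.act_mul, hx]
  rcases hmin.2 _ hN with h0 | hu
  · have : m ∈ {x : M | ∀ s : S, act x s = 0} := h
    rw [h0] at this
    exact hm this
  · obtain ⟨n, s, hns⟩ := hmin.1
    exact hns ((Set.eq_univ_iff_forall.mp hu n) s)

theorem act_image_ideal_univ {S : Type u} [NonUnitalSemiring S]
    {M : Type u} [AddCommMonoid M] (act : M → S → M)
    (hact : IsRightAction S M act) (hmin : IsMinimal S M act)
    (m : M) (J : Set S) (hJ : IsRightIdeal S J)
    (j : S) (hjJ : j ∈ J) (hj : act m j ≠ 0) :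
    {x : M | ∃ a ∈ J, x = act m a} = Set.univ := by
  have hN : IsSubsemimodule S M act {x : M | ∃ a ∈ J, x = act m a} := by
    refine ⟨⟨0, hJ.1, (hact.act_zero m).symm⟩, ?_, ?_⟩
    · rintro x ⟨a, haJ, rfl⟩ y ⟨b, hbJ, rfl⟩
      exact ⟨a + b, hJ.2.1 a haJ b hbJ, (hact.act_add m a b).symm⟩
    · rintro x ⟨a, haJ, rfl⟩ s
      exact ⟨a * s, hJ.2.2 a haJ s, (hact.act_mul m a s).symm⟩
  rcases hmin.2 _ hN with h0 | hu
  · have : act m j ∈ {x : M | ∃ a ∈ J, x = act m a} := ⟨j, hjJ, rfl⟩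
    rw [h0] at this
    exact absurd this hj
  · exact hu

/-- If `M` is minimal and `m ≠ 0`, then `δ_m` is a regular right
congruence on `S` whose zero class `{s : ms = 0}` is a maximal `δ_m`-saturated
right ideal. -/
theorem delta_m_mRegular_of_minimal {S : Type u} [NonUnitalSemiring S]
    {M : Type u} [AddCommMonoid M] (act : M → S → M)
    (hact : IsRightAction S M act) (hmin : IsMinimal S M act)
    (m : M) (hm : m ≠ 0) :
    IsRightCongruence S (fun a b : S => act m a = act m b) ∧
      IsRegularCong S (fun a b : S => act m a = act m b) ∧
      zeroClass S (fun a b : S => act m a = act m b) = {s : S | act m s = 0} ∧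
      IsMaximalSaturatedRightIdeal S (fun a b : S => act m a = act m b)
        {s : S | act m s = 0} := by
  obtain ⟨s₀, hs₀⟩ := exists_act_ne_zero_of_minimal act hact hmin m hm
  have hcong : IsRightCongruence S (fun a b : S => act m a = act m b) :=
    ⟨⟨fun _ => rfl, fun h => h.symm, fun h₁ h₂ => h₁.trans h₂⟩,
      fun a b c h => by simp only [hact.act_add, h],
      fun a b c h => by simp only [hact.act_mul, h]⟩
  have hzero : zeroClass S (fun a b : S => act m a = act m b) = {s : S | act m s = 0} := by
    ext s
    simp [zeroClass, hact.act_zero]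
  have hideal : IsRightIdeal S {s : S | act m s = 0} := by
    refine ⟨hact.act_zero m, ?_, ?_⟩
    · intro x hx y hy
      simp only [Set.mem_setOf_eq] at *
      rw [hact.act_add, hx, hy, add_zero]
    · intro x hx s
      simp only [Set.mem_setOf_eq] at *
      rw [hact.act_mul, hx, hact.zero_act]
  refine ⟨hcong, ?_, hzero, hideal, ?_, ?_, ?_⟩
  · -- regular: mS = M so ∃ e, m e = m
    have huniv := act_image_ideal_univ act hact hmin m Set.univ
      ⟨trivial, fun _ _ _ _ => trivial, fun _ _ _ => trivial⟩ s₀ trivial hs₀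
    have hm' : m ∈ {x : M | ∃ a ∈ (Set.univ : Set S), x = act m a} := by
      rw [huniv]; trivial
    obtain ⟨e, -, he⟩ := hm'
    exact ⟨e, fun s => by show act m (e * s) = act m s; rw [hact.act_mul, ← he]⟩
  · -- saturated
    intro s i hi hsi
    simp only [Set.mem_setOf_eq] at *
    rw [hsi, hi]
  · -- proper
    intro h
    exact hs₀ (Set.eq_univ_iff_forall.mp h s₀)
  · -- maximal
    intro J hJ hsat hsub
    by_cases hJI : J ⊆ {s : S | act m s = 0}
    · exact Or.inl (Set.Subset.antisymm hJI hsub)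
    · right
      obtain ⟨j, hjJ, hj⟩ := Set.not_subset.mp hJI
      simp only [Set.mem_setOf_eq] at hj
      have huniv := act_image_ideal_univ act hact hmin m J hJ j hjJ hj
      apply Set.eq_univ_iff_forall.mpr
      intro s
      have : act m s ∈ {x : M | ∃ a ∈ J, x = act m a} := by rw [huniv]; trivial
      obtain ⟨a, haJ, ha⟩ := this
      exact hsat s a haJ ha
end

section
/- If M is a simple right S-semimodule and m ∈ M is nonzero, then δ_m = {(a,b) : ma = mb} is a maximal regular right congruence on S whose zero class is a maximal δ_m-saturated right ideal. -/
universe u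

/-- If `M` is simple and `m ≠ 0`, then `δ_m` is a maximal regular
right congruence on `S` whose zero class is a maximal `δ_m`-saturated right
ideal. -/
theorem delta_m_sRegular_of_simple {S : Type u} [NonUnitalSemiring S]
    {M : Type u} [AddCommMonoid M] (act : M → S → M)
    (hact : IsRightAction S M act) (hsim : IsSimple S M act)
    (m : M) (hm : m ≠ 0) :
    IsMaximalRightCongruence S (fun a b : S => act m a = act m b) ∧
      IsRegularCong S (fun a b : S => act m a = act m b) ∧
      IsMaximalSaturatedRightIdeal S (fun a b : S => act m a = act m b)
        (zeroClass S (fun a b : S => act m a = act m b)) := by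
  obtain ⟨hmin, hcsim⟩ := hsim
  -- there is s with act m s ≠ 0
  have hZ : ∃ s : S, act m s ≠ 0 := by
    by_contra h
    push_neg at h
    have hsub : IsSubsemimodule S M act {x : M | ∀ s : S, act x s = 0} := by
      refine ⟨fun s => hact.zero_act s, ?_, ?_⟩
      · intro x hx y hy s
        rw [hact.add_act, hx, hy, add_zero]
      · intro x hx s t
        rw [← hact.act_mul, hx]
    rcases hmin.2 _ hsub with h0 | hu
    · have : m ∈ {x : M | ∀ s : S, act x s = 0} := h
      rw [h0] at this
      exact hm this
    · obtain ⟨m', s, hms⟩ := hmin.1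
      have : m' ∈ {x : M | ∀ s : S, act x s = 0} := hu ▸ Set.mem_univ m'
      exact hms (this s)
  -- mS = M
  have hrange : ∀ x : M, ∃ s : S, act m s = x := by
    have hsub : IsSubsemimodule S M act (Set.range (act m)) := by
      refine ⟨⟨0, hact.act_zero m⟩, ?_, ?_⟩
      · rintro x ⟨a, rfl⟩ y ⟨b, rfl⟩
        exact ⟨a + b, hact.act_add m a b⟩
      · rintro x ⟨a, rfl⟩ s
        exact ⟨a * s, hact.act_mul m a s⟩
    rcases hmin.2 _ hsub with h0 | hu
    · obtain ⟨s, hs⟩ := hZ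
      have : act m s ∈ Set.range (act m) := ⟨s, rfl⟩
      rw [h0] at this
      exact absurd this hs
    · intro x
      have : x ∈ Set.range (act m) := by rw [hu]; trivial
      exact this
  -- δ is a right congruence
  have hrc : IsRightCongruence S (fun a b : S => act m a = act m b) := by
    refine ⟨⟨fun a => rfl, fun h => h.symm, fun h1 h2 => h1.trans h2⟩, ?_, ?_⟩
    · intro a b c h
      show act m (a + c) = act m (b + c)
      rw [hact.act_add, hact.act_add, h]
    · intro a b c h
      show act m (a * c) = act m (b * c)
      rw [hact.act_mul, hact.act_mul, h]
  -- regularity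
  have hreg : IsRegularCong S (fun a b : S => act m a = act m b) := by
    obtain ⟨e, he⟩ := hrange m
    exact ⟨e, fun s => by show act m (e * s) = act m s; rw [hact.act_mul, he]⟩
  -- nontriviality
  obtain ⟨s₀, hs₀⟩ := hZ
  have hnt : ¬ act m s₀ = act m (0 : S) := by
    rw [hact.act_zero]; exact hs₀
  -- maximality of δ as a right congruence
  have hmaxcong : IsMaximalRightCongruence S (fun a b : S => act m a = act m b) := by
    refine ⟨hrc, ⟨s₀, 0, hnt⟩, ?_⟩
    intro τ hτ hsub
    set r : M → M → Prop := fun x y => ∃ a b : S, τ a b ∧ act m a = x ∧ act m b = y with hr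
    have hrcong : IsSemimoduleCong S M act r := by
      refine ⟨⟨?_, ?_, ?_⟩, ?_, ?_⟩
      · intro x
        obtain ⟨a, ha⟩ := hrange x
        exact ⟨a, a, hτ.1.refl a, ha, ha⟩
      · rintro x y ⟨a, b, hab, ha, hb⟩
        exact ⟨b, a, hτ.1.symm hab, hb, ha⟩
      · rintro x y z ⟨a, b, hab, ha, hb⟩ ⟨b', c, hbc, hb', hc⟩
        have : τ b b' := hsub b b' (show act m b = act m b' by rw [hb, hb'])
        exact ⟨a, c, hτ.1.trans (hτ.1.trans hab this) hbc, ha, hc⟩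
      · rintro x y z ⟨a, b, hab, ha, hb⟩
        obtain ⟨c, hc⟩ := hrange z
        refine ⟨a + c, b + c, hτ.2.1 a b c hab, ?_, ?_⟩
        · rw [hact.act_add, ha, hc]
        · rw [hact.act_add, hb, hc]
      · rintro x y s ⟨a, b, hab, ha, hb⟩
        refine ⟨a * s, b * s, hτ.2.2 a b s hab, ?_, ?_⟩
        · rw [hact.act_mul, ha]
        · rw [hact.act_mul, hb]
    rcases hcsim r hrcong with htriv | hfull
    · left
      intro a b
      constructor
      · intro h
        exact htriv (act m a) (act m b) ⟨a, b, h, rfl, rfl⟩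
      · exact hsub a b
    · right
      intro a b
      obtain ⟨a', b', hab, ha, hb⟩ := hfull (act m a) (act m b)
      have h1 : τ a a' := hsub a a' ha.symm
      have h2 : τ b' b := hsub b' b hb
      exact hτ.1.trans (hτ.1.trans h1 hab) h2
  -- zero class
  have hzc : zeroClass S (fun a b : S => act m a = act m b) = {s : S | act m s = 0} := by
    ext s
    simp only [zeroClass, Set.mem_setOf_eq, hact.act_zero]
  have hmaxid : IsMaximalSaturatedRightIdeal S (fun a b : S => act m a = act m b)
      (zeroClass S (fun a b : S => act m a = act m b)) := by
    rw [hzc]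
    refine ⟨⟨hact.act_zero m, ?_, ?_⟩, ?_, ?_, ?_⟩
    · intro x hx y hy
      show act m (x + y) = 0
      rw [hact.act_add, hx, hy, add_zero]
    · intro x hx s
      show act m (x * s) = 0
      rw [hact.act_mul, hx, hact.zero_act]
    · intro s i hi hsi
      show act m s = 0
      rw [hsi, hi]
    · intro h
      have : s₀ ∈ {s : S | act m s = 0} := h ▸ Set.mem_univ s₀
      exact hs₀ this
    · intro J hJ hJsat hIJ
      set N : Set M := {x : M | ∃ j ∈ J, act m j = x} with hN
      have hsub : IsSubsemimodule S M act N := by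
        refine ⟨⟨0, hJ.1, hact.act_zero m⟩, ?_, ?_⟩
        · rintro x ⟨a, haJ, rfl⟩ y ⟨b, hbJ, rfl⟩
          exact ⟨a + b, hJ.2.1 a haJ b hbJ, hact.act_add m a b⟩
        · rintro x ⟨a, haJ, rfl⟩ s
          exact ⟨a * s, hJ.2.2 a haJ s, hact.act_mul m a s⟩
      rcases hmin.2 _ hsub with h0 | hu
      · left
        apply Set.Subset.antisymm _ hIJ
        intro j hj
        have : act m j ∈ N := ⟨j, hj, rfl⟩
        rw [h0] at this
        exact this
      · right
        have hmN : m ∈ N := hu ▸ Set.mem_univ m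
        obtain ⟨j, hjJ, hjm⟩ := hmN
        ext s
        simp only [Set.mem_univ, iff_true]
        have hjs : j * s ∈ J := hJ.2.2 j hjJ s
        have : act m (j * s) = act m s := by rw [hact.act_mul, hjm]
        exact hJsat s (j * s) hjs this.symm
  exact ⟨hmaxcong, hreg, hmaxid⟩
end

section
/- Let R and S be semirings. A right congruence ρ on R × S is an m-regular right congruence if and only if ρ = σ × ∇_S for some m-regular right congruence σ on R, or ρ = ∇_R × δ for some m-regular right congruence δ on S. -/
universe u

/-!
Pulling back along a surjective homomorphism `f : T → R` identifies right congruences,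
regularity and maximal saturated right ideals on `R` with those on `T` that factor through `f`;
this settles the converse direction via the two projections.

For the direct one, let `Z` be the zero class of an m-regular `ρ` on `R × S`, and
`A = 0 × S`, `B = R × 0`. By maximality of `Z`, the saturation of `Z + A` is `Z` or everything,
and likewise for `B`. If `A ⊆ Z` then `ρ p (p.1, 0)` for all `p`, so `ρ` factors through the
first projection; symmetrically for `B`. If both saturations were everything, then `AB = BA = 0`
would force `(R × S) * A` and `(R × S) * B` into `Z`, hence `e * p ∈ Z` for the regularity
element `e`, hence `p ∈ Z` for all `p`: impossible.
-/

section RightCongruence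

variable {T : Type u} [NonUnitalSemiring T] {ρ : T → T → Prop}

theorem IsRightCongruence.isRightIdeal_zeroClass (hρ : IsRightCongruence T ρ) :
    IsRightIdeal T (zeroClass T ρ) := by
  refine ⟨hρ.1.refl 0, fun x hx y hy => ?_, fun x hx s => ?_⟩
  · have hxy := hρ.2.1 x 0 y hx
    rw [zero_add] at hxy
    exact hρ.1.trans hxy hy
  · have hxs := hρ.2.2 x 0 s hx
    rwa [zero_mul] at hxs

theorem IsRightCongruence.isSaturated_zeroClass (hρ : IsRightCongruence T ρ) :
    IsSaturated T ρ (zeroClass T ρ) :=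
  fun _ _ hi hsi => hρ.1.trans hsi hi

end RightCongruence

theorem Equivalence.rel_iff_of_rel_section {T R : Sort*} {ρ : T → T → Prop}
    (hρ : Equivalence ρ) {f : T → R} {g : R → T} (hg : ∀ p, ρ p (g (f p))) (p q : T) :
    ρ p q ↔ ρ (g (f p)) (g (f q)) :=
  ⟨fun h => hρ.trans (hρ.trans (hρ.symm (hg p)) h) (hg q),
    fun h => hρ.trans (hρ.trans (hg p) h) (hρ.symm (hg q))⟩

theorem equivalence_comap_iff {T R : Type*} {σ : R → R → Prop} {f : T → R}
    (hf : Function.Surjective f) : Equivalence (fun p q => σ (f p) (f q)) ↔ Equivalence σ := by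
  refine ⟨fun h => ⟨hf.forall.2 h.refl, fun {x y} => ?_, fun {x y z} => ?_⟩, (·.comap f)⟩
  · obtain ⟨p, rfl⟩ := hf x
    obtain ⟨q, rfl⟩ := hf y
    exact h.symm
  · obtain ⟨p, rfl⟩ := hf x
    obtain ⟨q, rfl⟩ := hf y
    obtain ⟨r, rfl⟩ := hf z
    exact h.trans

section Surjective

variable {T R : Type u} [NonUnitalSemiring T] [NonUnitalSemiring R] {f : T →ₙ+* R}
  {σ : R → R → Prop}

theorem isRightCongruence_comap_iff (hf : Function.Surjective f) :
    IsRightCongruence T (fun p q => σ (f p) (f q)) ↔ IsRightCongruence R σ := by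
  simp only [IsRightCongruence, equivalence_comap_iff hf, hf.forall, map_add, map_mul]

theorem isRegularCong_comap_iff (hf : Function.Surjective f) :
    IsRegularCong T (fun p q => σ (f p) (f q)) ↔ IsRegularCong R σ := by
  simp only [IsRegularCong, hf.exists, hf.forall, map_mul]

theorem zeroClass_comap : zeroClass T (fun p q => σ (f p) (f q)) = f ⁻¹' zeroClass R σ := by
  ext p
  simp [zeroClass]

theorem isRightIdeal_ker (f : T →ₙ+* R) : IsRightIdeal T {p | f p = 0} :=
  ⟨map_zero f, fun x hx y hy => by simp_all, fun x hx s => by simp_all⟩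

theorem IsRightIdeal.preimage {I : Set R} (hI : IsRightIdeal R I) (f : T →ₙ+* R) :
    IsRightIdeal T (f ⁻¹' I) :=
  ⟨by simpa using hI.1, fun x hx y hy => by simpa using hI.2.1 _ hx _ hy,
    fun x hx s => by simpa using hI.2.2 _ hx (f s)⟩

theorem IsRightIdeal.image {J : Set T} (hJ : IsRightIdeal T J) (hf : Function.Surjective f) :
    IsRightIdeal R (f '' J) := by
  refine ⟨⟨0, hJ.1, map_zero f⟩, ?_, fun _ ⟨x, hx, hfx⟩ s => ?_⟩
  · rintro _ ⟨x, hx, rfl⟩ _ ⟨y, hy, rfl⟩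
    exact ⟨x + y, hJ.2.1 x hx y hy, map_add f x y⟩
  · obtain ⟨t, rfl⟩ := hf s
    exact ⟨x * t, hJ.2.2 x hx t, by rw [map_mul, hfx]⟩

theorem IsSaturated.preimage {I : Set R} (hI : IsSaturated R σ I) :
    IsSaturated T (fun p q => σ (f p) (f q)) (f ⁻¹' I) :=
  fun _ _ hi hsi => hI _ _ hi hsi

theorem IsSaturated.image {J : Set T} (hJ : IsSaturated T (fun p q => σ (f p) (f q)) J)
    (hf : Function.Surjective f) : IsSaturated R σ (f '' J) := by
  rintro r _ ⟨q, hq, rfl⟩ hrq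
  obtain ⟨p, rfl⟩ := hf r
  exact ⟨p, hJ p q hq hrq, rfl⟩

theorem IsSaturated.preimage_image_eq {J : Set T}
    (hJ : IsSaturated T (fun p q => σ (f p) (f q)) J) (hσ : ∀ r, σ r r) :
    f ⁻¹' (f '' J) = J := by
  refine (Set.subset_preimage_image f J).antisymm' fun p ⟨q, hq, hqp⟩ => hJ p q hq ?_
  simpa [hqp] using hσ (f p)

theorem isMaximalSaturatedRightIdeal_preimage_iff (hf : Function.Surjective f)
    (hσ : ∀ r, σ r r) {I : Set R} :
    IsMaximalSaturatedRightIdeal T (fun p q => σ (f p) (f q)) (f ⁻¹' I) ↔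
      IsMaximalSaturatedRightIdeal R σ I := by
  have hinj : Function.Injective (Set.preimage f) := Set.preimage_injective.2 hf
  have himage : f '' (f ⁻¹' I) = I := Set.image_preimage_eq I hf
  constructor
  · rintro ⟨hIid, hIsat, hIne, hImax⟩
    refine ⟨himage ▸ hIid.image hf, himage ▸ hIsat.image hf,
      fun h => hIne (by simp [h]), ?_⟩
    intro J hJid hJsat hIJ
    exact (hImax _ (hJid.preimage f) hJsat.preimage (Set.preimage_mono hIJ)).imp
      (fun h => hinj h) (fun h => hinj (by simpa using h))
  · rintro ⟨hIid, hIsat, hIne, hImax⟩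
    refine ⟨hIid.preimage f, hIsat.preimage, fun h => hIne (hinj (by simpa using h)), ?_⟩
    intro J hJid hJsat hIJ
    have hJ := hJsat.preimage_image_eq hσ
    exact (hImax _ (hJid.image hf) (hJsat.image hf) (himage ▸ Set.image_mono hIJ)).imp
      (fun h => by rw [← hJ, h]) (fun h => by rw [← hJ, h, Set.preimage_univ])

theorem isMRegular_iff_of_surjective (hf : Function.Surjective f) {ρ : T → T → Prop}
    (hρσ : ∀ p q, ρ p q ↔ σ (f p) (f q)) : IsMRegular T ρ ↔ IsMRegular R σ := by
  obtain rfl : ρ = fun p q => σ (f p) (f q) := funext₂ fun p q => propext (hρσ p q)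
  rw [IsMRegular, IsMRegular, isRightCongruence_comap_iff hf, isRegularCong_comap_iff hf,
    zeroClass_comap]
  exact and_congr_right fun hσ =>
    and_congr_right' (isMaximalSaturatedRightIdeal_preimage_iff hf hσ.1.refl)

theorem IsMRegular.exists_isMRegular_of_rel_section {ρ : T → T → Prop} (hρ : IsMRegular T ρ)
    (hf : Function.Surjective f) {g : R → T} (hg : ∀ p, ρ p (g (f p))) :
    ∃ σ : R → R → Prop, IsMRegular R σ ∧ ∀ p q, ρ p q ↔ σ (f p) (f q) :=
  have hρσ := hρ.1.1.rel_iff_of_rel_section hg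
  ⟨fun a b => ρ (g a) (g b), (isMRegular_iff_of_surjective hf hρσ).1 hρ, hρσ⟩

end Surjective

section SaturatedAdd

variable {T : Type u} [NonUnitalSemiring T] {ρ : T → T → Prop}

theorem IsRightCongruence.add (hρ : IsRightCongruence T ρ) {a b c d : T} (hab : ρ a b)
    (hcd : ρ c d) : ρ (a + c) (b + d) := by
  have hcd' := hρ.2.1 c d b hcd
  rw [add_comm c, add_comm d] at hcd'
  exact hρ.1.trans (hρ.2.1 a b c hab) hcd'

def saturatedAdd (ρ : T → T → Prop) (I A : Set T) : Set T :=
  {p | ∃ i ∈ I, ∃ a ∈ A, ρ p (i + a)}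

variable {I A : Set T}

theorem isRightIdeal_saturatedAdd (hρ : IsRightCongruence T ρ) (hI : IsRightIdeal T I)
    (hA : IsRightIdeal T A) : IsRightIdeal T (saturatedAdd ρ I A) := by
  refine ⟨⟨0, hI.1, 0, hA.1, by simpa using hρ.1.refl 0⟩, ?_, ?_⟩
  · rintro p ⟨i, hi, a, ha, hp⟩ q ⟨j, hj, b, hb, hq⟩
    refine ⟨i + j, hI.2.1 i hi j hj, a + b, hA.2.1 a ha b hb, ?_⟩
    simpa only [add_add_add_comm] using hρ.add hp hq
  · rintro p ⟨i, hi, a, ha, hp⟩ s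
    refine ⟨i * s, hI.2.2 i hi s, a * s, hA.2.2 a ha s, ?_⟩
    simpa only [add_mul] using hρ.2.2 _ _ s hp

theorem isSaturated_saturatedAdd (hρ : Equivalence ρ) : IsSaturated T ρ (saturatedAdd ρ I A) :=
  fun _ _ ⟨i, hi, a, ha, hq⟩ hpq => ⟨i, hi, a, ha, hρ.trans hpq hq⟩

theorem subset_saturatedAdd_left (hρ : Equivalence ρ) (hA : (0 : T) ∈ A) :
    I ⊆ saturatedAdd ρ I A :=
  fun i hi => ⟨i, hi, 0, hA, by simpa using hρ.refl i⟩

theorem subset_saturatedAdd_right (hρ : Equivalence ρ) (hI : (0 : T) ∈ I) :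
    A ⊆ saturatedAdd ρ I A :=
  fun a ha => ⟨0, hI, a, ha, by simpa using hρ.refl a⟩

theorem IsMRegular.subset_zeroClass_or_saturatedAdd_eq_univ (hρ : IsMRegular T ρ)
    (hA : IsRightIdeal T A) :
    A ⊆ zeroClass T ρ ∨ saturatedAdd ρ (zeroClass T ρ) A = Set.univ := by
  obtain ⟨hcong, -, hZ, -, -, hmax⟩ := hρ
  refine (hmax _ (isRightIdeal_saturatedAdd hcong hZ hA) (isSaturated_saturatedAdd hcong.1)
    (subset_saturatedAdd_left hcong.1 hA.1)).imp_left fun h => ?_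
  exact h ▸ subset_saturatedAdd_right hcong.1 hZ.1

theorem IsRightCongruence.mul_mem_zeroClass (hρ : IsRightCongruence T ρ) {B : Set T}
    (hA : saturatedAdd ρ (zeroClass T ρ) A = Set.univ) (hAB : ∀ a ∈ A, ∀ b ∈ B, a * b = 0)
    (p : T) {b : T} (hb : b ∈ B) : p * b ∈ zeroClass T ρ := by
  obtain ⟨z, hz, a, ha, hp⟩ : p ∈ saturatedAdd ρ (zeroClass T ρ) A := hA ▸ Set.mem_univ p
  have hpb := hρ.2.2 _ _ b hp
  rw [add_mul, hAB a ha b hb, add_zero] at hpb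
  exact hρ.isSaturated_zeroClass _ _ (hρ.isRightIdeal_zeroClass.2.2 z hz b) hpb

theorem IsMRegular.subset_zeroClass_or_subset_zeroClass (hρ : IsMRegular T ρ) {B : Set T}
    (hA : IsRightIdeal T A) (hB : IsRightIdeal T B) (hAB : ∀ a ∈ A, ∀ b ∈ B, a * b = 0)
    (hBA : ∀ b ∈ B, ∀ a ∈ A, b * a = 0)
    (hsum : ∀ p, ∃ a ∈ A, ∃ b ∈ B, p = a + b) :
    A ⊆ zeroClass T ρ ∨ B ⊆ zeroClass T ρ := by
  refine (hρ.subset_zeroClass_or_saturatedAdd_eq_univ hA).imp_right fun hAuniv => ?_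
  refine (hρ.subset_zeroClass_or_saturatedAdd_eq_univ hB).resolve_right fun hBuniv => ?_
  obtain ⟨hcong, ⟨e, he⟩, hZ, hsat, hne, -⟩ := hρ
  refine hne (Set.eq_univ_of_forall fun p => ?_)
  obtain ⟨a, ha, b, hb, rfl⟩ := hsum p
  have hep : e * (a + b) ∈ zeroClass T ρ := by
    rw [mul_add]
    exact hZ.2.1 _ (hcong.mul_mem_zeroClass hBuniv hBA e ha) _
      (hcong.mul_mem_zeroClass hAuniv hAB e hb)
  exact hsat _ _ hep (hcong.1.symm (he _))

end SaturatedAdd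

section Prod

variable {R S : Type u} [NonUnitalSemiring R] [NonUnitalSemiring S]
  {ρ : R × S → R × S → Prop}

theorem IsRightCongruence.rel_fst (hρ : IsRightCongruence (R × S) ρ)
    (h : ∀ s : S, ρ (0, s) 0) (p : R × S) : ρ p (p.1, 0) := by
  simpa using hρ.2.1 _ _ (p.1, 0) (h p.2)

theorem IsRightCongruence.rel_snd (hρ : IsRightCongruence (R × S) ρ)
    (h : ∀ r : R, ρ (r, 0) 0) (p : R × S) : ρ p (0, p.2) := by
  simpa using hρ.2.1 _ _ (0, p.2) (h p.1)

end Prod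

theorem mRegular_on_prod_iff_general {R S : Type u} [NonUnitalSemiring R] [NonUnitalSemiring S]
    (ρ : R × S → R × S → Prop) :
    IsMRegular (R × S) ρ ↔
      ((∃ σ : R → R → Prop, IsMRegular R σ ∧
          ∀ p q : R × S, ρ p q ↔ σ p.1 q.1) ∨
       (∃ δ : S → S → Prop, IsMRegular S δ ∧
          ∀ p q : R × S, ρ p q ↔ δ p.2 q.2)) := by
  constructor
  · intro hρ
    obtain hfst | hsnd := hρ.subset_zeroClass_or_subset_zeroClass
      (isRightIdeal_ker (NonUnitalRingHom.fst R S)) (isRightIdeal_ker (NonUnitalRingHom.snd R S))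
      (fun a ha b hb => Prod.ext (by simp_all) (by simp_all))
      (fun b hb a ha => Prod.ext (by simp_all) (by simp_all))
      (fun p => ⟨(0, p.2), rfl, (p.1, 0), rfl, by simp⟩)
    · exact .inl (hρ.exists_isMRegular_of_rel_section (f := NonUnitalRingHom.fst R S)
        (g := (·, 0)) Prod.fst_surjective (hρ.1.rel_fst fun s => hfst rfl))
    · exact .inr (hρ.exists_isMRegular_of_rel_section (f := NonUnitalRingHom.snd R S)
        (g := (0, ·)) Prod.snd_surjective (hρ.1.rel_snd fun r => hsnd rfl))
  · rintro (⟨σ, hσ, hρσ⟩ | ⟨δ, hδ, hρδ⟩)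
    · exact (isMRegular_iff_of_surjective (f := NonUnitalRingHom.fst R S) Prod.fst_surjective
        hρσ).2 hσ
    · exact (isMRegular_iff_of_surjective (f := NonUnitalRingHom.snd R S) Prod.snd_surjective
        hρδ).2 hδ

/-- A right congruence `ρ` on `R × S` is m-regular iff
`ρ = σ × ∇_S` for some m-regular right congruence `σ` on `R`, or
`ρ = ∇_R × δ` for some m-regular right congruence `δ` on `S`. -/
theorem mRegular_on_prod_iff {R S : Type u} [NonUnitalSemiring R] [NonUnitalSemiring S]
    (ρ : R × S → R × S → Prop) (hcong : IsRightCongruence (R × S) ρ) :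
    IsMRegular (R × S) ρ ↔
      ((∃ σ : R → R → Prop, IsMRegular R σ ∧
          ∀ p q : R × S, ρ p q ↔ σ p.1 q.1) ∨
       (∃ δ : S → S → Prop, IsMRegular S δ ∧
          ∀ p q : R × S, ρ p q ↔ δ p.2 q.2)) :=
  mRegular_on_prod_iff_general ρ
end

section
/- A congruence σ on a semiring S is m-primitive (i.e., S/σ admits a faithful minimal semimodule) if and only if σ = ann_S(M) for some minimal right S-semimodule M, if and only if σ = (ρ : ∇_S) for some m-regular right congruence ρ on S. -/
universe u

def IsSRHom (R T : Type u) [NonUnitalSemiring R] [NonUnitalSemiring T]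
    (f : R → T) : Prop :=
  (∀ a b : R, f (a + b) = f a + f b) ∧ (∀ a b : R, f (a * b) = f a * f b) ∧ f 0 = 0

/-- A semiring is m-primitive if it admits a faithful minimal right semimodule. -/
def IsMPrimitive (T : Type u) [NonUnitalSemiring T] : Prop :=
  ∃ (M : Type u) (inst : AddCommMonoid M) (act : M → T → M),
    @IsRightAction T _ M inst act ∧ @IsMinimal T M inst act ∧
      ∀ a b : T, (∀ m : M, act m a = act m b) → a = b

/-- A congruence `σ` on `S` is m-primitive if the quotient `S/σ` (realized by a
surjective homomorphism with kernel `σ`) is an m-primitive semiring. -/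
def IsMPrimitiveCong (S : Type u) [NonUnitalSemiring S] (σ : S → S → Prop) : Prop :=
  ∃ (T : Type u) (instT : NonUnitalSemiring T) (f : S → T),
    @IsSRHom S T _ instT f ∧ Function.Surjective f ∧
      (∀ a b : S, f a = f b ↔ σ a b) ∧ @IsMPrimitive T instT

section AuxProofs

variable {S : Type u} [NonUnitalSemiring S]

private def congRingCon (σ : S → S → Prop) (hσ : IsCongruence S σ) : RingCon S where
  r := σ
  iseqv := hσ.1.1
  add' := fun {a b c d} h1 h2 => by
    have h3 := hσ.1.2.1 a b c h1
    have h4 := hσ.1.2.1 c d b h2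
    rw [add_comm c b, add_comm d b] at h4
    exact hσ.1.1.trans h3 h4
  mul' := fun {a b c d} h1 h2 =>
    hσ.1.1.trans (hσ.1.2.2 a b c h1) (hσ.2 c d b h2)

private theorem aux_ann_to_prim (σ : S → S → Prop) (hσ : IsCongruence S σ)
    (M : Type u) (inst : AddCommMonoid M) (act : M → S → M)
    (hact : @IsRightAction S _ M inst act) (hmin : @IsMinimal S M inst act)
    (hann : ∀ a b : S, σ a b ↔ ∀ m : M, act m a = act m b) :
    IsMPrimitiveCong S σ := by
  classical
  set c := congRingCon σ hσ with hc
  have hsurj : ∀ t : c.Quotient, ∃ s : S, (s : c.Quotient) = t := by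
    intro t; rcases t with ⟨s⟩; exact ⟨s, rfl⟩
  refine ⟨c.Quotient, inferInstance, fun s => (s : c.Quotient),
    ⟨fun a b => RingCon.coe_add c a b, fun a b => RingCon.coe_mul c a b,
      RingCon.coe_zero c⟩, hsurj, fun a b => c.eq, ?_⟩
  -- the action of the quotient on M
  have hwd : ∀ (m : M) (a b : S), c.toSetoid.r a b → act m a = act m b :=
    fun m a b h => (hann a b).1 h m
  refine ⟨M, inst, fun m t => Quotient.liftOn t (act m) (fun a b h => hwd m a b h),
    ?_, ?_, ?_⟩
  · constructor
    · intro m₁ m₂ t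
      obtain ⟨s, rfl⟩ := hsurj t
      exact hact.add_act m₁ m₂ s
    · intro m t₁ t₂
      obtain ⟨s₁, rfl⟩ := hsurj t₁
      obtain ⟨s₂, rfl⟩ := hsurj t₂
      rw [← RingCon.coe_add]
      exact hact.act_add m s₁ s₂
    · intro m t₁ t₂
      obtain ⟨s₁, rfl⟩ := hsurj t₁
      obtain ⟨s₂, rfl⟩ := hsurj t₂
      rw [← RingCon.coe_mul]
      exact hact.act_mul m s₁ s₂
    · intro m
      rw [← RingCon.coe_zero]
      exact hact.act_zero m
    · intro t
      obtain ⟨s, rfl⟩ := hsurj t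
      exact hact.zero_act s
  · constructor
    · obtain ⟨m, s, h⟩ := hmin.1
      exact ⟨m, (s : c.Quotient), h⟩
    · intro N hN
      refine hmin.2 N ⟨hN.1, hN.2.1, ?_⟩
      intro x hx s
      exact hN.2.2 x hx (s : c.Quotient)
  · intro a b
    obtain ⟨x, rfl⟩ := hsurj a
    obtain ⟨y, rfl⟩ := hsurj b
    intro h
    exact c.eq.2 ((hann x y).2 h)

private theorem aux_prim_to_ann (σ : S → S → Prop) (h : IsMPrimitiveCong S σ) :
    ∃ (M : Type u) (inst : AddCommMonoid M) (act : M → S → M),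
      @IsRightAction S _ M inst act ∧ @IsMinimal S M inst act ∧
        ∀ a b : S, σ a b ↔ ∀ m : M, act m a = act m b := by
  obtain ⟨T, instT, f, hf, hsurj, hker, M, instM, act, hact, hmin, hfaith⟩ := h
  refine ⟨M, instM, fun m s => act m (f s), ?_, ?_, ?_⟩
  · constructor
    · intro m₁ m₂ s; exact hact.add_act m₁ m₂ (f s)
    · intro m s₁ s₂; rw [hf.1 s₁ s₂]; exact hact.act_add m (f s₁) (f s₂)
    · intro m s₁ s₂; rw [hf.2.1 s₁ s₂]; exact hact.act_mul m (f s₁) (f s₂)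
    · intro m; rw [hf.2.2]; exact hact.act_zero m
    · intro s; exact hact.zero_act (f s)
  · constructor
    · obtain ⟨m, t, h⟩ := hmin.1
      obtain ⟨s, rfl⟩ := hsurj t
      exact ⟨m, s, h⟩
    · intro N hN
      refine hmin.2 N ⟨hN.1, hN.2.1, ?_⟩
      intro x hx t
      obtain ⟨s, rfl⟩ := hsurj t
      exact hN.2.2 x hx s
  · intro a b
    constructor
    · intro h m
      show act m (f a) = act m (f b)
      rw [(hker a b).2 h]
    · intro h
      exact (hker a b).1 (hfaith (f a) (f b) h)

private def rcAddCon (ρ : S → S → Prop) (hρ : IsRightCongruence S ρ) : AddCon S where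
  r := ρ
  iseqv := hρ.1
  add' := fun {a b c d} h1 h2 => by
    have h3 := hρ.2.1 a b c h1
    have h4 := hρ.2.1 c d b h2
    rw [add_comm c b, add_comm d b] at h4
    exact hρ.1.trans h3 h4

private theorem aux_mreg_to_ann (ρ : S → S → Prop) (hρ : IsMRegular S ρ)
    (σ : S → S → Prop) (hσρ : ∀ x y : S, σ x y ↔ ∀ s : S, ρ (s * x) (s * y)) :
    ∃ (M : Type u) (inst : AddCommMonoid M) (act : M → S → M),
      @IsRightAction S _ M inst act ∧ @IsMinimal S M inst act ∧
        ∀ a b : S, σ a b ↔ ∀ m : M, act m a = act m b := by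
  classical
  obtain ⟨hrc, ⟨e, he⟩, hmax⟩ := hρ
  set c := rcAddCon ρ hrc with hc
  have hwd : ∀ (s : S) (a b : S), c.toSetoid.r a b →
      ((a * s : S) : c.Quotient) = ((b * s : S) : c.Quotient) :=
    fun s a b h => c.eq.2 (hrc.2.2 a b s h)
  refine ⟨c.Quotient, inferInstance,
    fun m s => Quotient.liftOn m (fun a => ((a * s : S) : c.Quotient)) (hwd s),
    ?_, ?_, ?_⟩
  · constructor
    · intro m₁ m₂ s
      rcases m₁ with ⟨a⟩; rcases m₂ with ⟨b⟩
      show (((a + b) * s : S) : c.Quotient) = ((a * s + b * s : S) : c.Quotient)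
      rw [add_mul]
    · intro m s₁ s₂
      rcases m with ⟨a⟩
      show ((a * (s₁ + s₂) : S) : c.Quotient) = ((a * s₁ + a * s₂ : S) : c.Quotient)
      rw [mul_add]
    · intro m s₁ s₂
      rcases m with ⟨a⟩
      show ((a * (s₁ * s₂) : S) : c.Quotient) = ((a * s₁ * s₂ : S) : c.Quotient)
      rw [mul_assoc]
    · intro m
      rcases m with ⟨a⟩
      show ((a * 0 : S) : c.Quotient) = ((0 : S) : c.Quotient)
      rw [mul_zero]
    · intro s
      show ((0 * s : S) : c.Quotient) = ((0 : S) : c.Quotient)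
      rw [zero_mul]
  · constructor
    · -- nontriviality
      have hne : zeroClass S ρ ≠ Set.univ := hmax.2.2.1
      obtain ⟨a, ha⟩ : ∃ a : S, a ∉ zeroClass S ρ := by
        by_contra hcon
        push_neg at hcon
        exact hne (Set.eq_univ_of_forall hcon)
      refine ⟨((e : S) : c.Quotient), a, ?_⟩
      intro h0
      have h1 : ((e * a : S) : c.Quotient) = ((0 : S) : c.Quotient) := h0
      have h2 : ρ (e * a) 0 := c.eq.1 h1
      exact ha (hrc.1.trans (hrc.1.symm (he a)) h2)
    · intro N hN
      set I : Set S := {s : S | ((s : c.Quotient) ∈ N)} with hI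
      have hIdeal : IsRightIdeal S I := by
        refine ⟨hN.1, ?_, ?_⟩
        · intro x hx y hy
          have : ((x + y : S) : c.Quotient) = (x : c.Quotient) + (y : c.Quotient) := rfl
          show ((x + y : S) : c.Quotient) ∈ N
          rw [this]
          exact hN.2.1 _ hx _ hy
        · intro x hx s
          exact hN.2.2 _ hx s
      have hSat : IsSaturated S ρ I := by
        intro s i hi hsi
        show ((s : S) : c.Quotient) ∈ N
        rw [c.eq.2 hsi]
        exact hi
      have hSub : zeroClass S ρ ⊆ I := by
        intro i hi
        show ((i : S) : c.Quotient) ∈ N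
        have : ((i : S) : c.Quotient) = ((0 : S) : c.Quotient) := c.eq.2 hi
        rw [this]
        exact hN.1
      rcases hmax.2.2.2 I hIdeal hSat hSub with hI0 | hIuniv
      · left
        ext m
        rcases m with ⟨a⟩
        constructor
        · intro hm
          have ha : a ∈ I := hm
          rw [hI0] at ha
          exact c.eq.2 ha
        · intro hm
          have h2 : ((a : S) : c.Quotient) = ((0 : S) : c.Quotient) := hm
          show ((a : S) : c.Quotient) ∈ N
          rw [h2]
          exact hN.1
      · right
        apply Set.eq_univ_of_forall
        intro m
        rcases m with ⟨a⟩
        have : a ∈ I := by rw [hIuniv]; trivial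
        exact this
  · intro x y
    rw [hσρ x y]
    constructor
    · intro h m
      rcases m with ⟨a⟩
      exact c.eq.2 (h a)
    · intro h a
      exact c.eq.1 (h ((a : S) : c.Quotient))

private theorem aux_ann_to_mreg (σ : S → S → Prop)
    (M : Type u) (inst : AddCommMonoid M) (act : M → S → M)
    (hact : @IsRightAction S _ M inst act) (hmin : @IsMinimal S M inst act)
    (hann : ∀ a b : S, σ a b ↔ ∀ m : M, act m a = act m b) :
    ∃ ρ : S → S → Prop, IsMRegular S ρ ∧
      ∀ x y : S, σ x y ↔ ∀ s : S, ρ (s * x) (s * y) := by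
  classical
  obtain ⟨m₁, s₁, hns⟩ := hmin.1
  have hm₁ : m₁ ≠ 0 := by
    intro h
    exact hns (h ▸ hact.zero_act s₁)
  -- the common annihilated set is {0}
  have hN₀ : {m : M | ∀ s : S, act m s = 0} = {(0 : M)} := by
    rcases hmin.2 {m : M | ∀ s : S, act m s = 0}
      ⟨fun s => hact.zero_act s,
        fun x hx y hy s => by rw [hact.add_act, hx s, hy s, add_zero],
        fun x hx s t => by rw [← hact.act_mul, hx (s * t)]⟩ with h | h
    · exact h
    · exfalso
      have : m₁ ∈ Set.univ := trivial
      rw [← h] at this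
      exact hns (this s₁)
  -- orbits of nonzero elements are everything
  have horb : ∀ m₀ : M, m₀ ≠ 0 → Set.range (act m₀) = Set.univ := by
    intro m₀ h0
    rcases hmin.2 (Set.range (act m₀))
      ⟨⟨0, hact.act_zero m₀⟩,
        fun x ⟨s, hs⟩ y ⟨t, ht⟩ => ⟨s + t, by rw [hact.act_add, hs, ht]⟩,
        fun x ⟨s, hs⟩ t => ⟨s * t, by rw [hact.act_mul, hs]⟩⟩ with h | h
    · exfalso
      apply h0
      have : m₀ ∈ {m : M | ∀ s : S, act m s = 0} := by
        intro s
        have : act m₀ s ∈ Set.range (act m₀) := ⟨s, rfl⟩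
        rw [h] at this
        exact this
      rw [hN₀] at this
      exact this
    · exact h
  have hm₁orb := horb m₁ hm₁
  obtain ⟨e, he⟩ : ∃ e : S, act m₁ e = m₁ := by
    have : m₁ ∈ Set.range (act m₁) := by rw [hm₁orb]; trivial
    exact this
  set ρ : S → S → Prop := fun a b => act m₁ a = act m₁ b with hρdef
  have hrc : IsRightCongruence S ρ := by
    refine ⟨⟨fun _ => rfl, Eq.symm, Eq.trans⟩, ?_, ?_⟩
    · intro a b c h
      show act m₁ (a + c) = act m₁ (b + c)
      rw [hact.act_add, hact.act_add, h]
    · intro a b c h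
      show act m₁ (a * c) = act m₁ (b * c)
      rw [hact.act_mul, hact.act_mul, h]
  have hzc : ∀ a : S, a ∈ zeroClass S ρ ↔ act m₁ a = 0 := by
    intro a
    show ρ a 0 ↔ _
    rw [hρdef]
    simp only [hact.act_zero]
  refine ⟨ρ, ⟨hrc, ⟨e, fun s => ?_⟩, ?_, ?_, ?_, ?_⟩, ?_⟩
  · show act m₁ (e * s) = act m₁ s
    rw [hact.act_mul, he]
  · -- right ideal
    refine ⟨(hzc 0).2 (hact.act_zero m₁), ?_, ?_⟩
    · intro x hx y hy
      rw [hzc] at hx hy ⊢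
      rw [hact.act_add, hx, hy, add_zero]
    · intro x hx s
      rw [hzc] at hx ⊢
      rw [hact.act_mul, hx, hact.zero_act]
  · -- saturated
    intro s i hi hsi
    rw [hzc] at hi ⊢
    rw [show act m₁ s = act m₁ i from hsi, hi]
  · -- proper
    intro h
    have : e ∈ zeroClass S ρ := by rw [h]; trivial
    rw [hzc, he] at this
    exact hm₁ this
  · -- maximality
    intro J hJ hJsat hJsub
    rcases hmin.2 ((act m₁) '' J)
      ⟨⟨0, hJ.1, hact.act_zero m₁⟩,
        fun x ⟨j, hj, hjx⟩ y ⟨k, hk, hky⟩ =>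
          ⟨j + k, hJ.2.1 j hj k hk, by rw [hact.act_add, hjx, hky]⟩,
        fun x ⟨j, hj, hjx⟩ s => ⟨j * s, hJ.2.2 j hj s, by rw [hact.act_mul, hjx]⟩⟩
      with h | h
    · left
      apply Set.Subset.antisymm _ hJsub
      intro j hj
      rw [hzc]
      have : act m₁ j ∈ (act m₁) '' J := ⟨j, hj, rfl⟩
      rw [h] at this
      exact this
    · right
      apply Set.eq_univ_of_forall
      intro a
      have : act m₁ a ∈ (act m₁) '' J := by rw [h]; trivial
      obtain ⟨j, hj, hja⟩ := this
      exact hJsat a j hj hja.symm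
  · -- σ = (ρ : ∇)
    intro x y
    rw [hann x y]
    constructor
    · intro h s
      show act m₁ (s * x) = act m₁ (s * y)
      rw [hact.act_mul, hact.act_mul, h]
    · intro h m
      have : m ∈ Set.range (act m₁) := by rw [hm₁orb]; trivial
      obtain ⟨s, rfl⟩ := this
      rw [← hact.act_mul, ← hact.act_mul]
      exact h s

end AuxProofs

/-- A congruence `σ` on `S` is m-primitive iff `σ = ann_S(M)` for
some minimal right `S`-semimodule `M`, iff `σ = (ρ : ∇_S)` for some m-regular
right congruence `ρ` on `S`. -/
theorem mPrimitiveCong_iff {S : Type u} [NonUnitalSemiring S]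
    (σ : S → S → Prop) (hσ : IsCongruence S σ) :
    (IsMPrimitiveCong S σ ↔
      ∃ (M : Type u) (inst : AddCommMonoid M) (act : M → S → M),
        @IsRightAction S _ M inst act ∧ @IsMinimal S M inst act ∧
          ∀ a b : S, σ a b ↔ ∀ m : M, act m a = act m b) ∧
    (IsMPrimitiveCong S σ ↔
      ∃ ρ : S → S → Prop, IsMRegular S ρ ∧
        ∀ x y : S, σ x y ↔ ∀ s : S, ρ (s * x) (s * y)) := by
  constructor
  · constructor
    · exact aux_prim_to_ann σ
    · rintro ⟨M, inst, act, hact, hmin, hann⟩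
      exact aux_ann_to_prim σ hσ M inst act hact hmin hann
  · constructor
    · intro h
      obtain ⟨M, inst, act, hact, hmin, hann⟩ := aux_prim_to_ann σ h
      exact aux_ann_to_mreg σ M inst act hact hmin hann
    · rintro ⟨ρ, hρ, hσρ⟩
      obtain ⟨M, inst, act, hact, hmin, hann⟩ := aux_mreg_to_ann ρ hρ σ hσρ
      exact aux_ann_to_prim σ hσ M inst act hact hmin hann
end

section
/- A commutative semiring S is m-primitive (admits a faithful minimal S-semimodule) if and only if S is a semifield. -/
universe u

/-- A commutative semiring is m-primitive iff it is a semifield,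
i.e., it has a multiplicative identity `e ≠ 0` and every nonzero element is
invertible. -/
theorem commutative_mPrimitive_iff_semifield {S : Type u} [NonUnitalCommSemiring S] :
    IsMPrimitive S ↔
      ∃ e : S, e ≠ 0 ∧ (∀ s : S, e * s = s) ∧
        ∀ a : S, a ≠ 0 → ∃ b : S, a * b = e := by

  constructor
  · rintro ⟨M, instM, act, hact, ⟨⟨m₀, s₀, hms⟩, hN⟩, hfaith⟩
    have hsub : IsSubsemimodule S M act (Set.range (act m₀)) := by
      refine ⟨⟨0, hact.act_zero _⟩, ?_, ?_⟩
      · rintro _ ⟨s, rfl⟩ _ ⟨t, rfl⟩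
        exact ⟨s + t, hact.act_add _ _ _⟩
      · rintro _ ⟨s, rfl⟩ t
        exact ⟨s * t, hact.act_mul _ _ _⟩
    have hMrange : Set.range (act m₀) = Set.univ := by
      rcases hN _ hsub with h | h
      · exfalso
        apply hms
        have hmem : act m₀ s₀ ∈ Set.range (act m₀) := ⟨s₀, rfl⟩
        rw [h] at hmem
        exact hmem
      · exact h
    have hsurj : ∀ x : M, ∃ s, act m₀ s = x := by
      intro x
      have : x ∈ Set.range (act m₀) := by rw [hMrange]; trivial
      exact this
    have hinj : ∀ a b : S, act m₀ a = act m₀ b → a = b := by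
      intro a b hab
      apply hfaith
      intro x
      obtain ⟨s, rfl⟩ := hsurj x
      rw [← hact.act_mul, ← hact.act_mul, mul_comm s a, mul_comm s b,
        hact.act_mul, hact.act_mul, hab]
    obtain ⟨e, he⟩ := hsurj m₀
    have heid : ∀ s : S, e * s = s := by
      intro s
      apply hinj
      rw [hact.act_mul, he]
    have hene : e ≠ 0 := by
      intro h
      apply hms
      rw [← heid s₀, h, hact.act_mul, hact.act_zero, hact.zero_act]
    refine ⟨e, hene, heid, ?_⟩
    intro a ha
    have hsubA : IsSubsemimodule S M act {y | ∃ x, act x a = y} := by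
      refine ⟨⟨0, hact.zero_act _⟩, ?_, ?_⟩
      · rintro _ ⟨x, rfl⟩ _ ⟨y, rfl⟩
        exact ⟨x + y, hact.add_act _ _ _⟩
      · rintro _ ⟨x, rfl⟩ s
        exact ⟨act x s, by rw [← hact.act_mul, ← hact.act_mul, mul_comm]⟩
    rcases hN _ hsubA with h | h
    · exfalso
      apply ha
      apply hfaith
      intro x
      have hmem : act x a ∈ {y | ∃ x, act x a = y} := ⟨x, rfl⟩
      rw [h, Set.mem_singleton_iff] at hmem
      rw [hmem, hact.act_zero]
    · have hmem : m₀ ∈ {y | ∃ x, act x a = y} := by rw [h]; trivial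
      obtain ⟨x, hx⟩ := hmem
      obtain ⟨b, rfl⟩ := hsurj x
      refine ⟨b, hinj _ _ ?_⟩
      rw [mul_comm, hact.act_mul, hx, he]
  · rintro ⟨e, he0, heid, hinv⟩
    refine ⟨S, inferInstance, fun m s => m * s,
      ⟨fun _ _ _ => add_mul _ _ _, fun _ _ _ => mul_add _ _ _,
        fun _ _ _ => (mul_assoc _ _ _).symm, fun _ => mul_zero _, fun _ => zero_mul _⟩,
      ⟨⟨e, e, by simpa [heid e] using he0⟩, ?_⟩, ?_⟩
    · intro N hNsub
      by_cases hz : ∀ x ∈ N, x = (0 : S)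
      · left
        apply Set.eq_singleton_iff_unique_mem.mpr
        exact ⟨hNsub.1, fun x hx => hz x hx⟩
      · right
        push_neg at hz
        obtain ⟨x, hxN, hx0⟩ := hz
        obtain ⟨b, hb⟩ := hinv x hx0
        have heN : e ∈ N := by
          have := hNsub.2.2 x hxN b
          simp only [] at this; rwa [hb] at this
        apply Set.eq_univ_of_forall
        intro s
        have := hNsub.2.2 e heN s
        simp only [] at this; rwa [heid s] at this
    · intro a b hab
      have := hab e
      simpa [heid] using this
end

section
/- Let S be a semiring with |S| > 2. Then S is a congruence-simple semifield if and only if S is a field. -/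
universe u

/-- `S` is a semifield: commutative, has an identity `e ≠ 0`, and every nonzero
element is multiplicatively invertible. -/
def IsSemifield (S : Type u) [NonUnitalSemiring S] : Prop :=
  (∀ a b : S, a * b = b * a) ∧
    ∃ e : S, e ≠ 0 ∧ (∀ s : S, e * s = s) ∧ ∀ a : S, a ≠ 0 → ∃ b : S, a * b = e

/-- `S` is congruence-simple: its only semiring congruences are the diagonal
and the full relation. -/
def IsCongSimple (S : Type u) [NonUnitalSemiring S] : Prop :=
  ∀ ρ : S → S → Prop, IsCongruence S ρ →
    (∀ a b : S, ρ a b → a = b) ∨ ∀ a b : S, ρ a b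

/-- A semiring `S` with more than two elements is a
congruence-simple semifield iff it is a field (every element has an additive
inverse, making it a commutative ring with identity and nonzero inverses). -/
theorem congSimple_semifield_iff_field {S : Type u} [NonUnitalSemiring S]
    (hcard : ∃ a b c : S, a ≠ b ∧ a ≠ c ∧ b ≠ c) :
    (IsCongSimple S ∧ IsSemifield S) ↔
      (IsSemifield S ∧ ∀ a : S, ∃ b : S, a + b = 0) := by
  constructor
  · rintro ⟨hsimp, hsf⟩
    refine ⟨hsf, ?_⟩
    obtain ⟨comm, e, he0, heid, hinv⟩ := hsf
    by_cases hx : ∃ x : S, e + x = 0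
    · obtain ⟨x, hex⟩ := hx
      intro a
      refine ⟨a * x, ?_⟩
      have : a * (e + x) = a + a * x := by
        rw [mul_add, comm a e, heid]
      rw [hex, mul_zero] at this
      exact this.symm
    · push_neg at hx
      -- zerosumfree
      have hzsf : ∀ a b : S, a + b = 0 → a = 0 := by
        intro a b hab
        by_contra ha
        obtain ⟨a', ha'⟩ := hinv a ha
        have : a' * (a + b) = e + a' * b := by
          rw [mul_add, comm a' a, ha']
        rw [hab, mul_zero] at this
        exact hx (a' * b) this.symm
      -- no zero divisors
      have hnzd : ∀ a b : S, a ≠ 0 → b ≠ 0 → a * b ≠ 0 := by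
        intro a b ha hb hab
        obtain ⟨a', ha'⟩ := hinv a ha
        have : a' * (a * b) = b := by
          rw [← mul_assoc, comm a' a, ha', heid]
        rw [hab, mul_zero] at this
        exact hb this.symm
      have hzsum : ∀ a b : S, a + b = 0 → a = 0 ∧ b = 0 := by
        intro a b hab
        have ha := hzsf a b hab
        have hb := hzsf b a (by rwa [add_comm])
        exact ⟨ha, hb⟩
      -- the congruence: a ρ b iff (a = 0 ↔ b = 0)
      set ρ : S → S → Prop := fun a b => (a = 0 ↔ b = 0) with hρ
      have hcong : IsCongruence S ρ := by
        refine ⟨⟨⟨fun a => Iff.rfl, fun h => h.symm, fun h h' => h.trans h'⟩, ?_, ?_⟩, ?_⟩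
        · intro a b c h
          constructor
          · intro hac
            obtain ⟨ha, hc⟩ := hzsum a c hac
            rw [h.mp ha, hc, add_zero]
          · intro hbc
            obtain ⟨hb, hc⟩ := hzsum b c hbc
            rw [h.mpr hb, hc, add_zero]
        · intro a b c h
          constructor
          · intro hac
            by_cases hc : c = 0
            · rw [hc, mul_zero]
            · by_cases hb : b = 0
              · rw [hb, zero_mul]
              · exact absurd hac (by
                  have ha : a ≠ 0 := fun ha => hb (h.mp ha)
                  exact hnzd a c ha hc)
          · intro hbc
            by_cases hc : c = 0
            · rw [hc, mul_zero]
            · by_cases ha : a = 0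
              · rw [ha, zero_mul]
              · exact absurd hbc (by
                  have hb : b ≠ 0 := fun hb => ha (h.mpr hb)
                  exact hnzd b c hb hc)
        · intro a b c h
          constructor
          · intro hca
            by_cases hc : c = 0
            · rw [hc, zero_mul]
            · by_cases hb : b = 0
              · rw [hb, mul_zero]
              · exact absurd hca (by
                  have ha : a ≠ 0 := fun ha => hb (h.mp ha)
                  exact hnzd c a hc ha)
          · intro hcb
            by_cases hc : c = 0
            · rw [hc, zero_mul]
            · by_cases ha : a = 0
              · rw [ha, mul_zero]
              · exact absurd hcb (by
                  have hb : b ≠ 0 := fun hb => ha (h.mpr hb)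
                  exact hnzd c b hc hb)
      rcases hsimp ρ hcong with hdiag | hfull
      · -- at most one nonzero element, contradicting |S| > 2
        exfalso
        obtain ⟨a, b, c, hab, hac, hbc⟩ := hcard
        have key : ∀ x y : S, x ≠ 0 → y ≠ 0 → x = y := by
          intro x y hx hy
          exact hdiag x y ⟨fun h => absurd h hx, fun h => absurd h hy⟩
        by_cases ha : a = 0
        · by_cases hb : b = 0
          · exact hab (ha.trans hb.symm)
          · by_cases hc : c = 0
            · exact hac (ha.trans hc.symm)
            · exact hbc (key b c hb hc)
        · by_cases hb : b = 0
          · by_cases hc : c = 0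
            · exact hbc (hb.trans hc.symm)
            · exact hac (key a c ha hc)
          · exact hab (key a b ha hb)
      · exact absurd ((hfull e 0).mpr rfl) he0
  · rintro ⟨hsf, hadd⟩
    refine ⟨?_, hsf⟩
    obtain ⟨comm, e, he0, heid, hinv⟩ := hsf
    rintro ρ ⟨⟨hequiv, haddc, hmulr⟩, hmull⟩
    by_cases hz : ∃ a : S, a ≠ 0 ∧ ρ a 0
    · right
      obtain ⟨a, ha, hρa⟩ := hz
      obtain ⟨a', ha'⟩ := hinv a ha
      have hall : ∀ s : S, ρ s 0 := by
        intro s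
        have := hmulr a 0 (a' * s) hρa
        rwa [zero_mul, ← mul_assoc, ha', heid] at this
      intro x y
      exact hequiv.trans (hall x) (hequiv.symm (hall y))
    · left
      push_neg at hz
      intro x y hxy
      obtain ⟨c, hc⟩ := hadd y
      have h1 : ρ (x + c) 0 := by
        have := haddc x y c hxy
        rwa [hc] at this
      have h2 : x + c = 0 := by
        by_contra h
        exact hz (x + c) h h1
      calc x = x + (y + c) := by rw [hc, add_zero]
        _ = (x + c) + y := by rw [add_comm y c, ← add_assoc]
        _ = y := by rw [h2, zero_add]
end

section
/- If S is a right s-primitive semiring (there exists a faithful simple right S-semimodule M), then there is a division semiring D (the opposite of End_S(M)) such that the opposite semiring S^op embeds as a 1-fold transitive subsemiring of End_D(M) via a ↦ (m ↦ ma). -/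
universe u

/-- An `S`-semimodule endomorphism of `M` (an element of `End_S(M)`). -/
def IsSEndo {S : Type u} [NonUnitalSemiring S] {M : Type u} [AddCommMonoid M]
    (act : M → S → M) (α : M → M) : Prop :=
  (∀ a b : M, α (a + b) = α a + α b) ∧ α 0 = 0 ∧
    ∀ (m : M) (s : S), α (act m s) = act (α m) s

/-- If `S` is right s-primitive, witnessed by a faithful simple
right `S`-semimodule `M`, then `D = End_S(M)^op` is a division semiring (Schur)
and `a ↦ ψ_a = (m ↦ ma)` embeds `S^op` as a 1-fold transitive subsemiring of
`End_D(M)`, where `β ∈ End_D(M)` means `β` is additive and commutes with every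
`S`-endomorphism of `M`. -/
theorem sPrimitive_embeds_transitively {S : Type u} [NonUnitalSemiring S]
    {M : Type u} [AddCommMonoid M] (act : M → S → M)
    (hact : IsRightAction S M act) (hsimple : IsSimple S M act)
    (hfaithful : ∀ a b : S, (∀ m : M, act m a = act m b) → a = b) :
    -- `End_S(M)` (hence its opposite `D`) is a division semiring:
    (IsSEndo act (id : M → M) ∧
      ∀ α : M → M, IsSEndo act α → (∃ m : M, α m ≠ 0) →
        ∃ β : M → M, IsSEndo act β ∧ (∀ m : M, α (β m) = m) ∧ ∀ m : M, β (α m) = m) ∧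
    -- each `ψ_a : m ↦ ma` is a `D`-endomorphism of `M`:
    (∀ a : S, (∀ m n : M, act (m + n) a = act m a + act n a) ∧
      act (0 : M) a = 0 ∧
      ∀ α : M → M, IsSEndo act α → ∀ m : M, act (α m) a = α (act m a)) ∧
    -- `ψ : S^op → End_D(M)` is an injective semiring homomorphism:
    (∀ a b : S, (∀ m : M, act m a = act m b) → a = b) ∧
    (∀ (a b : S) (m : M), act m (a + b) = act m a + act m b) ∧
    (∀ (a b : S) (m : M), act m (a * b) = act (act m a) b) ∧
    -- the image `{ψ_a : a ∈ S}` is 1-fold transitive: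
    (∀ m : M, m ≠ 0 → ∀ n : M, ∃ a : S, act m a = n) := by
  obtain ⟨⟨⟨m0, s0, hms⟩, hmin⟩, hcong⟩ := hsimple
  -- every nonzero element moves under some s
  have hZ : ∀ m : M, m ≠ 0 → ∃ s : S, act m s ≠ 0 := by
    intro m hm
    by_contra h
    push_neg at h
    have hsub : IsSubsemimodule S M act {x : M | ∀ s : S, act x s = 0} := by
      refine ⟨fun s => hact.zero_act s, ?_, ?_⟩
      · intro x hx y hy s
        rw [hact.add_act, hx s, hy s, add_zero]
      · intro x hx s t
        rw [← hact.act_mul, hx]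
    rcases hmin _ hsub with h1 | h1
    · have hmem : m ∈ {x : M | ∀ s : S, act x s = 0} := h
      rw [h1] at hmem
      exact hm hmem
    · have : m0 ∈ {x : M | ∀ s : S, act x s = 0} := h1 ▸ Set.mem_univ m0
      exact hms (this s0)
  have htrans : ∀ m : M, m ≠ 0 → ∀ n : M, ∃ a : S, act m a = n := by
    intro m hm n
    have hsub : IsSubsemimodule S M act {x : M | ∃ a : S, act m a = x} := by
      refine ⟨⟨0, hact.act_zero m⟩, ?_, ?_⟩
      · rintro x ⟨a, ha⟩ y ⟨b, hb⟩
        exact ⟨a + b, by rw [hact.act_add, ha, hb]⟩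
      · rintro x ⟨a, ha⟩ s
        exact ⟨a * s, by rw [hact.act_mul, ha]⟩
    rcases hmin _ hsub with h1 | h1
    · exfalso
      obtain ⟨s, hs⟩ := hZ m hm
      have : act m s ∈ {x : M | ∃ a : S, act m a = x} := ⟨s, rfl⟩
      rw [h1] at this
      exact hs this
    · have : n ∈ {x : M | ∃ a : S, act m a = x} := by rw [h1]; trivial
      exact this
  refine ⟨⟨⟨fun a b => rfl, rfl, fun m s => rfl⟩, ?_⟩, ?_, hfaithful,
    fun a b m => hact.act_add m a b, fun a b m => hact.act_mul m a b, htrans⟩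
  · -- Schur
    rintro α ⟨hadd, hzero, hsmul⟩ ⟨m1, hm1⟩
    -- injectivity via congruence simplicity
    have hinj : ∀ a b : M, α a = α b → a = b := by
      have hc : IsSemimoduleCong S M act (fun a b => α a = α b) := by
        refine ⟨⟨fun a => rfl, fun h => h.symm, fun h1 h2 => h1.trans h2⟩, ?_, ?_⟩
        · intro a b c h; rw [hadd, hadd, h]
        · intro a b s h; rw [hsmul, hsmul, h]
      rcases hcong _ hc with h | h
      · exact h
      · exact absurd ((h m1 0).trans hzero) hm1
    -- surjectivity via minimality
    have hsurj : ∀ n : M, ∃ m : M, α m = n := by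
      intro n
      have hsub : IsSubsemimodule S M act {x : M | ∃ m : M, α m = x} := by
        refine ⟨⟨0, hzero⟩, ?_, ?_⟩
        · rintro x ⟨a, ha⟩ y ⟨b, hb⟩
          exact ⟨a + b, by rw [hadd, ha, hb]⟩
        · rintro x ⟨a, ha⟩ s
          exact ⟨act a s, by rw [hsmul, ha]⟩
      rcases hmin _ hsub with h1 | h1
      · exfalso
        have : α m1 ∈ {x : M | ∃ m : M, α m = x} := ⟨m1, rfl⟩
        rw [h1] at this
        exact hm1 this
      · have : n ∈ {x : M | ∃ m : M, α m = x} := by rw [h1]; trivial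
        exact this
    classical
    refine ⟨fun n => Classical.choose (hsurj n), ⟨?_, ?_, ?_⟩, ?_, ?_⟩
    · intro a b
      apply hinj
      rw [hadd]
      rw [Classical.choose_spec (hsurj (a + b)), Classical.choose_spec (hsurj a),
        Classical.choose_spec (hsurj b)]
    · apply hinj
      rw [Classical.choose_spec (hsurj 0), hzero]
    · intro m s
      apply hinj
      rw [hsmul, Classical.choose_spec (hsurj (act m s)), Classical.choose_spec (hsurj m)]
    · intro m
      exact Classical.choose_spec (hsurj m)
    · intro m
      apply hinj
      rw [Classical.choose_spec (hsurj (α m))]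
  · intro a
    exact ⟨fun m n => hact.add_act m n a, hact.zero_act a,
      fun α hα m => (hα.2.2 m a).symm⟩
end
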